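/- arXiv:2008.03803 — 10 statements merged into one kernel-verified Lean document; each statement's English description precedes it below -/
import Mathlib

section
/- The ring F_2 × F_2 is the union of three proper subrings, and is not the union of two proper subrings; that is, its covering number is 3. -/
/-- `R` is the union of `n` proper subrings (subrings need not contain 1). -/
def CoversWith (R : Type*) [NonUnitalRing R] (n : ℕ) : Prop :=
  ∃ c : Fin n → NonUnitalSubring R, (∀ i, c i ≠ ⊤) ∧ ∀ x : R, ∃ i, x ∈ c i

/-!
A proper subring is a proper additive subgroup, so by Lagrange it has at most half the elements
of a finite ring `R`. All subrings contain `0`, so `n` proper subrings cover at most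
`n * (|R| / 2 - 1)` nonzero elements. For `|R| = 4` this rules out `n = 2`; three subrings suffice:
the two coordinate axes and the diagonal of `F₂ × F₂`.
-/

theorem NonUnitalSubring.two_mul_card_le_of_ne_top {R : Type*} [NonUnitalRing R] [Finite R]
    {s : NonUnitalSubring R} (hs : s ≠ ⊤) : 2 * Nat.card s ≤ Nat.card R := by
  have hindex : 1 < s.toAddSubgroup.index :=
    s.toAddSubgroup.one_lt_index_of_ne_top (toAddSubgroup_eq_top.not.mpr hs)
  calc 2 * Nat.card s ≤ s.toAddSubgroup.index * Nat.card s.toAddSubgroup :=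
        Nat.mul_le_mul_right _ hindex
    _ = Nat.card R := s.toAddSubgroup.index_mul_card

theorem CoversWith.card_sub_one_le {R : Type*} [NonUnitalRing R] [Finite R] {n : ℕ}
    (h : CoversWith R n) : Nat.card R - 1 ≤ n * (Nat.card R / 2 - 1) := by
  obtain ⟨c, hproper, hcover⟩ := h
  have hnonzero : ({0}ᶜ : Set R) ⊆ ⋃ i, (c i : Set R) \ {0} := fun x hx => by
    obtain ⟨i, hi⟩ := hcover x
    exact Set.mem_iUnion.2 ⟨i, hi, hx⟩
  calc Nat.card R - 1 = ({0}ᶜ : Set R).ncard := by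
        rw [← Set.ncard_univ, ← Set.ncard_sdiff_singleton_of_mem (Set.mem_univ 0),
          Set.compl_eq_univ_sdiff]
    _ ≤ ∑ i, ((c i : Set R) \ {0}).ncard :=
        (Set.ncard_le_ncard hnonzero).trans (Set.ncard_iUnion_le_of_fintype _)
    _ = ∑ i, (Nat.card (c i) - 1) := by
        simp only [Set.ncard_sdiff_singleton_of_mem (c _).zero_mem, ← Nat.card_coe_set_eq,
          SetLike.coe_sort_coe]
    _ ≤ ∑ _i : Fin n, (Nat.card R / 2 - 1) := Finset.sum_le_sum fun i _ => by
        have := NonUnitalSubring.two_mul_card_le_of_ne_top (hproper i)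
        omega
    _ = n * (Nat.card R / 2 - 1) := by simp

theorem not_coversWith_zmod_two_prod_two : ¬ CoversWith (ZMod 2 × ZMod 2) 2 := fun h => by
  have := h.card_sub_one_le
  simp only [Nat.card_prod, Nat.card_zmod] at this
  omega

theorem coversWith_zmod_two_prod_three : CoversWith (ZMod 2 × ZMod 2) 3 := by
  let c : Fin 3 → NonUnitalSubring (ZMod 2 × ZMod 2) :=
    ![(⊤ : NonUnitalSubring (ZMod 2)).prod ⊥, (⊥ : NonUnitalSubring (ZMod 2)).prod ⊤,
      (NonUnitalRingHom.fst _ _).eqLocus (NonUnitalRingHom.snd _ _)]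
  have hmiss : ∀ i, ![((0 : ZMod 2), (1 : ZMod 2)), (1, 0), (1, 0)] i ∉ c i := by
    intro i
    fin_cases i <;> simp [c, NonUnitalSubring.mem_prod, NonUnitalSubring.mem_bot]
  refine ⟨c, fun i h => hmiss i (h ▸ NonUnitalSubring.mem_top _), fun x => ?_⟩
  have hx : x.2 = 0 ∨ x.1 = 0 ∨ x.1 = x.2 := by revert x; decide
  rcases hx with h | h | h
  · exact ⟨0, by simp [c, NonUnitalSubring.mem_prod, h]⟩
  · exact ⟨1, by simp [c, NonUnitalSubring.mem_prod, h]⟩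
  · exact ⟨2, by simp [c, h]⟩

/-- The covering number of `F₂ × F₂` is 3. -/
theorem covering_number_F2xF2_eq_three :
    CoversWith (ZMod 2 × ZMod 2) 3 ∧ ¬ CoversWith (ZMod 2 × ZMod 2) 2 :=
  ⟨coversWith_zmod_two_prod_three, not_coversWith_zmod_two_prod_two⟩
end

section
/- The covering number of F_4 × F_4 is 4: it is the union of its four maximal subrings, but no three proper subrings cover it. -/
/-!
Write `F` for the field with four elements and `𝔽₂ = {x | x ^ 2 = x}` for its prime field. A
subring of `F × F` whose two projections are onto and which contains some `(0, d)` with `d ≠ 0`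
is everything, since multiplying `(0, d)` by its elements sweeps out `0 × F`; and a subring of
`F` containing an element outside `𝔽₂` is all of `F`, as it has at least three elements and its
order divides four. This makes `F × 𝔽₂`, `𝔽₂ × F`, the diagonal and the graph of Frobenius
maximal, and they cover `F × F` because `F ∖ 𝔽₂ = {ω, ω²}`. On the other hand any two of
`(0, ω)`, `(ω, 0)`, `(ω, ω)`, `(ω, ω²)` already generate `F × F`, so three proper subrings
cannot cover these four points.
-/

theorem NonUnitalSubring.eq_top_of_exists_fst_snd {R S : Type*} [NonUnitalRing R] [Ring S]
    (T : NonUnitalSubring (R × S)) (hfst : ∀ r, ∃ s, (r, s) ∈ T) (hsnd : ∀ s, ∃ r, (r, s) ∈ T)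
    {w : R × S} (hw : w ∈ T) (hw₁ : w.1 = 0) (hw₂ : IsUnit w.2) : T = ⊤ := by
  have hzero (s : S) : ((0 : R), s) ∈ T := by
    obtain ⟨r, hr⟩ := hsnd (s * ↑hw₂.unit⁻¹)
    convert T.mul_mem hr hw using 1
    ext <;> simp [hw₁, mul_assoc]
  refine eq_top_iff.mpr fun p _ => ?_
  obtain ⟨s, hs⟩ := hfst p.1
  convert T.add_mem hs (hzero (p.2 - s)) using 1
  ext <;> simp

section CharTwo

variable (R : Type*) [CommRing R] [ExpChar R 2]

def sndFrobeniusFixed : NonUnitalSubring (R × R) :=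
  ((frobenius R 2).comp (RingHom.snd R R)).eqLocus (RingHom.snd R R) |>.toNonUnitalSubring

def fstFrobeniusFixed : NonUnitalSubring (R × R) :=
  ((frobenius R 2).comp (RingHom.fst R R)).eqLocus (RingHom.fst R R) |>.toNonUnitalSubring

def frobeniusGraph : NonUnitalSubring (R × R) :=
  ((frobenius R 2).comp (RingHom.fst R R)).eqLocus (RingHom.snd R R) |>.toNonUnitalSubring

variable {R}

@[simp] theorem mem_sndFrobeniusFixed {x : R × R} : x ∈ sndFrobeniusFixed R ↔ x.2 ^ 2 = x.2 :=
  Iff.rfl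

@[simp] theorem mem_fstFrobeniusFixed {x : R × R} : x ∈ fstFrobeniusFixed R ↔ x.1 ^ 2 = x.1 :=
  Iff.rfl

@[simp] theorem mem_frobeniusGraph {x : R × R} : x ∈ frobeniusGraph R ↔ x.1 ^ 2 = x.2 :=
  Iff.rfl

end CharTwo

def diagonalSubring (R : Type*) [Ring R] : NonUnitalSubring (R × R) :=
  (RingHom.fst R R).eqLocus (RingHom.snd R R) |>.toNonUnitalSubring

@[simp] theorem mem_diagonalSubring {R : Type*} [Ring R] {x : R × R} :
    x ∈ diagonalSubring R ↔ x.1 = x.2 :=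
  Iff.rfl

theorem ne_zero_of_sq_ne_self {M₀ : Type*} [MonoidWithZero M₀] {a : M₀} (ha : a ^ 2 ≠ a) :
    a ≠ 0 := by
  rintro rfl
  simp at ha

section FieldOfOrderFour

variable {F : Type*} [Field F]

theorem exists_sq_ne_self (hF : Nat.card F = 4) : ∃ ω : F, ω ^ 2 ≠ ω := by
  by_contra! h
  have hsurj : Function.Surjective fun b : Bool => if b then (1 : F) else 0 := by
    intro x
    obtain rfl | rfl := IsIdempotentElem.iff_eq_zero_or_one.mp ((sq x).symm.trans (h x))
    exacts [⟨false, rfl⟩, ⟨true, rfl⟩]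
  have := Nat.card_le_card_of_surjective _ hsurj
  simp [hF] at this

variable [Finite F]

theorem pow_four_eq_self (hF : Nat.card F = 4) (a : F) : a ^ 4 = a := by
  have := Fintype.ofFinite F
  rw [← hF, Nat.card_eq_fintype_card]
  exact FiniteField.pow_card a

theorem sq_add_self_add_one_eq_zero (hF : Nat.card F = 4) {a : F} (ha : a ^ 2 ≠ a) :
    a ^ 2 + a + 1 = 0 := by
  have ha₁ : a - 1 ≠ 0 := sub_ne_zero.mpr (by rintro rfl; simp at ha)
  have : a * (a - 1) * (a ^ 2 + a + 1) = 0 := by linear_combination pow_four_eq_self hF a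
  simpa [ne_zero_of_sq_ne_self ha, ha₁] using this

theorem sq_sq_ne_sq (hF : Nat.card F = 4) {a : F} (ha : a ^ 2 ≠ a) : (a ^ 2) ^ 2 ≠ a ^ 2 := by
  rw [← pow_mul, pow_four_eq_self hF]
  exact ha.symm

theorem eq_or_eq_sq_of_sq_ne_self (hF : Nat.card F = 4) {a b : F} (ha : a ^ 2 ≠ a)
    (hb : b ^ 2 ≠ b) : b = a ∨ b = a ^ 2 := by
  have : (b - a) * (b - a ^ 2) = 0 := by
    linear_combination sq_add_self_add_one_eq_zero hF hb +
      (a - b - 1) * sq_add_self_add_one_eq_zero hF ha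
  simpa [sub_eq_zero] using this

theorem NonUnitalSubring.eq_top_of_mem_sq_ne_self (hF : Nat.card F = 4) (T : NonUnitalSubring F)
    {c : F} (hc : c ∈ T) (hc₂ : c ^ 2 ≠ c) : T = ⊤ := by
  have hc₀ := ne_zero_of_sq_ne_self hc₂
  have hsub : ({0, c, c ^ 2} : Set F) ⊆ T := by
    simp [Set.insert_subset_iff, hc, sq, T.zero_mem, T.mul_mem hc hc]
  have hthree : ({0, c, c ^ 2} : Set F).ncard = 3 :=
    Set.ncard_eq_three.mpr ⟨0, c, c ^ 2, hc₀.symm, (pow_ne_zero 2 hc₀).symm, hc₂.symm, rfl⟩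
  have hle : 3 ≤ Nat.card T.toAddSubgroup := hthree ▸ Set.ncard_le_ncard hsub
  have hdvd := hF ▸ T.toAddSubgroup.card_addSubgroup_dvd_card
  have hcard : Nat.card T.toAddSubgroup = Nat.card F := by
    have := Nat.le_of_dvd (by norm_num) hdvd
    interval_cases h : Nat.card T.toAddSubgroup <;> simp_all
  exact NonUnitalSubring.toAddSubgroup_injective (T.toAddSubgroup.eq_top_of_card_eq hcard)

theorem NonUnitalSubring.eq_top_of_mem_of_sq_ne_self (hF : Nat.card F = 4)
    (S : NonUnitalSubring (F × F)) {u v w : F × F} (hu : u ∈ S) (hv : v ∈ S) (hw : w ∈ S)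
    (hu₁ : u.1 ^ 2 ≠ u.1) (hv₂ : v.2 ^ 2 ≠ v.2) (hw₁ : w.1 = 0) (hw₂ : w.2 ≠ 0) : S = ⊤ := by
  have hfst := (S.map (NonUnitalRingHom.fst F F)).eq_top_of_mem_sq_ne_self hF ⟨u, hu, rfl⟩ hu₁
  have hsnd := (S.map (NonUnitalRingHom.snd F F)).eq_top_of_mem_sq_ne_self hF ⟨v, hv, rfl⟩ hv₂
  refine S.eq_top_of_exists_fst_snd (fun r => ?_) (fun s => ?_) hw hw₁ hw₂.isUnit
  · obtain ⟨x, hx, rfl⟩ := NonUnitalSubring.mem_map.mp (hfst ▸ NonUnitalSubring.mem_top r)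
    exact ⟨x.2, hx⟩
  · obtain ⟨x, hx, rfl⟩ := NonUnitalSubring.mem_map.mp (hsnd ▸ NonUnitalSubring.mem_top s)
    exact ⟨x.1, hx⟩

def pairwiseGeneratingPoints (ω : F) : Fin 4 → F × F :=
  ![(0, ω), (ω, 0), (ω, ω), (ω, ω ^ 2)]

theorem eq_top_of_pairwiseGeneratingPoints_mem (hF : Nat.card F = 4) {ω : F} (hω : ω ^ 2 ≠ ω)
    (S : NonUnitalSubring (F × F)) {i j : Fin 4} (hij : i ≠ j)
    (hi : pairwiseGeneratingPoints ω i ∈ S) (hj : pairwiseGeneratingPoints ω j ∈ S) : S = ⊤ := by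
  wlog hlt : i < j generalizing i j
  · exact this hij.symm hj hi (hij.lt_or_gt.resolve_left hlt)
  have hω₀ := ne_zero_of_sq_ne_self hω
  have hsub := S.sub_mem hj hi
  fin_cases i <;> fin_cases j <;> simp [pairwiseGeneratingPoints] at hlt hi hj hsub
  · exact S.eq_top_of_mem_of_sq_ne_self hF hj hi hi hω hω rfl hω₀
  · exact S.eq_top_of_mem_of_sq_ne_self hF hj hi hi hω hω rfl hω₀
  · exact S.eq_top_of_mem_of_sq_ne_self hF hj hi hi hω hω rfl hω₀
  · exact S.eq_top_of_mem_of_sq_ne_self hF hi hj hsub hω hω rfl hω₀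
  · exact S.eq_top_of_mem_of_sq_ne_self hF hi hj hsub hω (sq_sq_ne_sq hF hω) rfl
      (pow_ne_zero 2 hω₀)
  · exact S.eq_top_of_mem_of_sq_ne_self hF hi hi hsub hω hω rfl (sub_ne_zero.mpr hω)

theorem not_coversWith_three (hF : Nat.card F = 4) : ¬ CoversWith (F × F) 3 := by
  rintro ⟨c, hproper, hcover⟩
  obtain ⟨ω, hω⟩ := exists_sq_ne_self hF
  choose k hk using fun i => hcover (pairwiseGeneratingPoints ω i)
  obtain ⟨i, j, hij, hkij⟩ := Fintype.exists_ne_map_eq_of_card_lt k (by simp)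
  exact hproper (k j) (eq_top_of_pairwiseGeneratingPoints_mem hF hω _ hij (hkij ▸ hk i) (hk j))

theorem isCoatom_sndFrobeniusFixed [ExpChar F 2] (hF : Nat.card F = 4) :
    IsCoatom (sndFrobeniusFixed F) := by
  obtain ⟨ω, hω⟩ := exists_sq_ne_self hF
  refine ⟨fun h => hω (mem_sndFrobeniusFixed.mp (h ▸ NonUnitalSubring.mem_top (0, ω))),
    fun N hN => ?_⟩
  obtain ⟨x, hxN, hx⟩ := SetLike.exists_of_lt hN
  rw [mem_sndFrobeniusFixed] at hx
  have hx₁ : (x.1, (0 : F)) ∈ N := hN.le (by simp)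
  exact N.eq_top_of_mem_of_sq_ne_self hF (hN.le (by simp : (ω, (0 : F)) ∈ _)) hxN
    (N.sub_mem hxN hx₁) hω hx (by simp) (by simpa using ne_zero_of_sq_ne_self hx)

theorem isCoatom_fstFrobeniusFixed [ExpChar F 2] (hF : Nat.card F = 4) :
    IsCoatom (fstFrobeniusFixed F) := by
  obtain ⟨ω, hω⟩ := exists_sq_ne_self hF
  refine ⟨fun h => hω (mem_fstFrobeniusFixed.mp (h ▸ NonUnitalSubring.mem_top (ω, 0))),
    fun N hN => ?_⟩
  obtain ⟨x, hxN, hx⟩ := SetLike.exists_of_lt hN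
  have h0ω : ((0 : F), ω) ∈ N := hN.le (by simp)
  exact N.eq_top_of_mem_of_sq_ne_self hF hxN h0ω h0ω hx hω rfl (ne_zero_of_sq_ne_self hω)

theorem isCoatom_diagonalSubring (hF : Nat.card F = 4) : IsCoatom (diagonalSubring F) := by
  obtain ⟨ω, hω⟩ := exists_sq_ne_self hF
  refine ⟨fun h => zero_ne_one (mem_diagonalSubring.mp (h ▸ NonUnitalSubring.mem_top (0, 1))),
    fun N hN => ?_⟩
  obtain ⟨x, hxN, hx⟩ := SetLike.exists_of_lt hN
  rw [mem_diagonalSubring] at hx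
  have hωω : (ω, ω) ∈ N := hN.le (by simp)
  have hx₁ : (x.1, x.1) ∈ N := hN.le (by simp)
  exact N.eq_top_of_mem_of_sq_ne_self hF hωω hωω (N.sub_mem hxN hx₁) hω hω (by simp)
    (by simpa [sub_eq_zero] using Ne.symm hx)

theorem isCoatom_frobeniusGraph [ExpChar F 2] (hF : Nat.card F = 4) :
    IsCoatom (frobeniusGraph F) := by
  obtain ⟨ω, hω⟩ := exists_sq_ne_self hF
  refine ⟨fun h => ?_, fun N hN => ?_⟩
  · have := mem_frobeniusGraph.mp (h ▸ NonUnitalSubring.mem_top ((0 : F), (1 : F)))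
    simp at this
  obtain ⟨x, hxN, hx⟩ := SetLike.exists_of_lt hN
  rw [mem_frobeniusGraph] at hx
  have hωω : (ω, ω ^ 2) ∈ N := hN.le (by simp)
  have hx₁ : (x.1, x.1 ^ 2) ∈ N := hN.le (by simp)
  exact N.eq_top_of_mem_of_sq_ne_self hF hωω hωω (N.sub_mem hxN hx₁) hω (sq_sq_ne_sq hF hω)
    (by simp) (by simpa [sub_eq_zero] using Ne.symm hx)

end FieldOfOrderFour

/-- The covering number of `F₄ × F₄` is 4: it is the union of its four maximal
subrings, but no three proper subrings cover it. -/
theorem covering_number_F4xF4_eq_four :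
    (∃ c : Fin 4 → NonUnitalSubring (GaloisField 2 2 × GaloisField 2 2),
      (∀ i, c i ≠ ⊤ ∧ ∀ N, c i < N → N = ⊤) ∧ ∀ x, ∃ i, x ∈ c i) ∧
    ¬ CoversWith (GaloisField 2 2 × GaloisField 2 2) 3 := by
  have hF : Nat.card (GaloisField 2 2) = 4 := GaloisField.card 2 2 two_ne_zero
  refine ⟨⟨![sndFrobeniusFixed _, fstFrobeniusFixed _, diagonalSubring _, frobeniusGraph _],
    fun i => ?_, fun x => ?_⟩, not_coversWith_three hF⟩
  · fin_cases i
    exacts [isCoatom_sndFrobeniusFixed hF, isCoatom_fstFrobeniusFixed hF,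
      isCoatom_diagonalSubring hF, isCoatom_frobeniusGraph hF]
  · by_cases h₂ : x.2 ^ 2 = x.2
    · exact ⟨0, h₂⟩
    by_cases h₁ : x.1 ^ 2 = x.1
    · exact ⟨1, h₁⟩
    rcases eq_or_eq_sq_of_sq_ne_self hF h₁ h₂ with h | h
    exacts [⟨2, h.symm⟩, ⟨3, h.symm⟩]
end

section
/- The covering number of the matrix ring M_2(F_2) is 4. -/
open Matrix

/- With `h, k ≥ 2` the indices of `H, K`, inclusion-exclusion and `[G : H ⊓ K] ≤ h k` give
`|H ∪ K| ≤ |G| (1/h + 1/k - 1/(h k)) = |G| (1 - (1 - 1/h) (1 - 1/k)) ≤ 3 |G| / 4`. -/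
theorem AddSubgroup.four_mul_ncard_union_le {G : Type*} [AddGroup G] [Finite G]
    {H K : AddSubgroup G} (hH : H ≠ ⊤) (hK : K ≠ ⊤) :
    4 * ((H : Set G) ∪ K).ncard ≤ 3 * Nat.card G := by
  have hunion := Set.ncard_union_add_ncard_inter (H : Set G) K
  rw [← coe_inf, ← Nat.card_coe_set_eq (H : Set G), ← Nat.card_coe_set_eq (K : Set G),
    ← Nat.card_coe_set_eq ((H ⊓ K : AddSubgroup G) : Set G)] at hunion
  have hHn := H.card_mul_index
  have hKn := K.card_mul_index
  have hHKn := (H ⊓ K).card_mul_index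
  have hHK : (H ⊓ K).index ≤ H.index * K.index := index_inf_le
  obtain ⟨h, hh⟩ : ∃ h, H.index = h + 2 := Nat.exists_eq_add_of_le' (one_lt_index_of_ne_top hH)
  obtain ⟨k, hk⟩ : ∃ k, K.index = k + 2 := Nat.exists_eq_add_of_le' (one_lt_index_of_ne_top hK)
  generalize ((H : Set G) ∪ K).ncard = u at *
  generalize Nat.card G = n at *
  generalize Nat.card H = a at *
  generalize Nat.card K = b at *
  generalize Nat.card (H ⊓ K : AddSubgroup G) = c at *
  generalize (H ⊓ K).index = m at *
  generalize H.index = i at *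
  generalize K.index = j at *
  subst hh hk
  refine Nat.le_of_mul_le_mul_left ?_ (by positivity : 0 < (h + 2) * (k + 2))
  nlinarith [Nat.mul_le_mul_left c hHK, congrArg (· * ((h + 2) * (k + 2))) hunion,
    Nat.zero_le (h * k * n)]

section lineStabilizer

variable {K n : Type*} [CommRing K] [Fintype n]

def Matrix.lineStabilizer (v : n → K) : NonUnitalSubring (Matrix n n K) where
  carrier := {m | ∃ c : K, m *ᵥ v = c • v}
  add_mem' := by
    rintro m m' ⟨c, hc⟩ ⟨c', hc'⟩
    exact ⟨c + c', by rw [add_mulVec, hc, hc', add_smul]⟩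
  mul_mem' := by
    rintro m m' ⟨c, hc⟩ ⟨c', hc'⟩
    exact ⟨c * c', by rw [← mulVec_mulVec, hc', mulVec_smul, hc, smul_smul, mul_comm]⟩
  zero_mem' := ⟨0, by rw [zero_mulVec, zero_smul]⟩
  neg_mem' := by
    rintro m ⟨c, hc⟩
    exact ⟨-c, by rw [neg_mulVec, hc, neg_smul]⟩

@[simp]
theorem Matrix.mem_lineStabilizer {v : n → K} {m : Matrix n n K} :
    m ∈ lineStabilizer v ↔ ∃ c : K, m *ᵥ v = c • v :=
  Iff.rfl

end lineStabilizer

namespace M2F2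

open NonUnitalSubring

local notation "M" => Matrix (Fin 2) (Fin 2) (ZMod 2)

-- `ω² + ω + 1 = 0`, and `F₂[ω] = {0, 1, ω, ω²} ≅ F₄` is modelled as the centralizer of `ω`.
def ω : M := !![0, 1; 1, 1]

theorem mem_centralizer_ω {x : M} : x ∈ centralizer {ω} ↔ ω * x = x * ω := by
  simp [mem_centralizer_iff]

theorem centralizer_ω_le {S : NonUnitalSubring M} (hω : ω ∈ S) :
    centralizer {ω} ≤ S := by
  have hcentralizer : ∀ a : M, ω * a = a * ω → a = 0 ∨ a = 1 ∨ a = ω ∨ a = ω * ω := by decide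
  have hω3 : ω * ω * ω = 1 := by decide
  intro a ha
  rcases hcentralizer a (mem_centralizer_ω.1 ha) with rfl | rfl | rfl | rfl
  · exact S.zero_mem
  · exact hω3 ▸ S.mul_mem (S.mul_mem hω hω) hω
  · exact hω
  · exact S.mul_mem hω hω

theorem exists_add_mul_eq_of_not_commute (x y : M) (hx : ω * x ≠ x * ω) :
    ∃ a b : M, ω * a = a * ω ∧ ω * b = b * ω ∧ a + b * x = y := by
  revert x y
  decide

theorem le_centralizer_ω {S : NonUnitalSubring M} (hS : S ≠ ⊤) (hω : ω ∈ S) :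
    S ≤ centralizer {ω} := by
  intro x hx
  by_contra hxω
  refine hS ((eq_top_iff' S).2 fun y => ?_)
  obtain ⟨a, b, ha, hb, rfl⟩ :=
    exists_add_mul_eq_of_not_commute x y (mt mem_centralizer_ω.2 hxω)
  exact S.add_mem (centralizer_ω_le hω (mem_centralizer_ω.2 ha))
    (S.mul_mem (centralizer_ω_le hω (mem_centralizer_ω.2 hb)) hx)

theorem mem_lineStabilizer_or_mem_centralizer (x : M) :
    x ∈ lineStabilizer ![1, 0] ∨ x ∈ lineStabilizer ![0, 1] ∨ x ∈ lineStabilizer ![1, 1] ∨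
      x ∈ centralizer {ω} := by
  simp only [mem_lineStabilizer, mem_centralizer_ω]
  revert x
  decide

theorem coversWith_four : CoversWith M 4 := by
  have ne_top {S : NonUnitalSubring M} (x : M) (hx : x ∉ S) : S ≠ ⊤ :=
    (ne_of_mem_of_not_mem' (mem_top x) hx).symm
  refine ⟨![lineStabilizer ![1, 0], lineStabilizer ![0, 1], lineStabilizer ![1, 1],
    centralizer {ω}], fun i => ?_, fun x => ?_⟩
  · fin_cases i
    · exact ne_top (S := lineStabilizer ![1, 0]) !![0, 0; 1, 0]
        (by rw [mem_lineStabilizer]; decide)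
    · exact ne_top (S := lineStabilizer ![0, 1]) !![0, 1; 0, 0]
        (by rw [mem_lineStabilizer]; decide)
    · exact ne_top (S := lineStabilizer ![1, 1]) !![1, 0; 0, 0]
        (by rw [mem_lineStabilizer]; decide)
    · exact ne_top (S := centralizer {ω}) !![1, 0; 0, 0]
        (by rw [mem_centralizer_ω]; decide)
  · rcases mem_lineStabilizer_or_mem_centralizer x with h | h | h | h
    exacts [⟨0, h⟩, ⟨1, h⟩, ⟨2, h⟩, ⟨3, h⟩]

theorem ncard_insert_zero_not_commute_ω : (insert 0 {x : M | ω * x ≠ x * ω}).ncard = 13 := by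
  rw [Set.ncard_eq_toFinset_card']
  decide

theorem not_coversWith_three : ¬ CoversWith M 3 := by
  rintro ⟨c, hproper, hcover⟩
  obtain ⟨i, hi⟩ := hcover ω
  obtain ⟨j, k, hijk⟩ : ∃ j k : Fin 3, ∀ l, l = i ∨ l = j ∨ l = k := by
    clear hi
    revert i
    decide
  have hsub : insert 0 {x : M | ω * x ≠ x * ω} ⊆ (c j : Set M) ∪ c k := by
    rintro x (rfl | hx)
    · exact Or.inl (c j).zero_mem
    obtain ⟨l, hl⟩ := hcover x
    rcases hijk l with rfl | rfl | rfl
    · exact absurd (mem_centralizer_ω.1 (le_centralizer_ω (hproper l) hi hl)) hx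
    · exact Or.inl hl
    · exact Or.inr hl
  have hunion : 4 * ((c j : Set M) ∪ c k).ncard ≤ 3 * Nat.card M :=
    AddSubgroup.four_mul_ncard_union_le (H := (c j).toAddSubgroup) (K := (c k).toAddSubgroup)
      (toAddSubgroup_eq_top.not.2 (hproper j)) (toAddSubgroup_eq_top.not.2 (hproper k))
  have hcard : Nat.card M = 16 := by
    rw [Nat.card_eq_fintype_card]
    decide
  have := Set.ncard_le_ncard hsub
  rw [ncard_insert_zero_not_commute_ω] at this
  omega

end M2F2

/-- The covering number of `M₂(F₂)` is 4. -/
theorem covering_number_M2F2_eq_four :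
    CoversWith (Matrix (Fin 2) (Fin 2) (ZMod 2)) 4 ∧
    ¬ CoversWith (Matrix (Fin 2) (Fin 2) (ZMod 2)) 3 :=
  ⟨M2F2.coversWith_four, M2F2.not_coversWith_three⟩
end

section
/- The ring T_2(F_3) of upper triangular 2×2 matrices over F_3 has covering number 4. -/
/-- The ring `T₂(F₃)` of upper triangular `2 × 2` matrices over `F₃`, as a
subring of `M₂(F₃)`. -/
def T2F3 : NonUnitalSubring (Matrix (Fin 2) (Fin 2) (ZMod 3)) where
  carrier := {A | A 1 0 = 0}
  zero_mem' := rfl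
  add_mem' := by
    intro a b ha hb
    simp only [Set.mem_setOf_eq, Matrix.add_apply] at *
    rw [ha, hb, add_zero]
  neg_mem' := by
    intro a ha
    simp only [Set.mem_setOf_eq, Matrix.neg_apply] at *
    rw [ha, neg_zero]
  mul_mem' := by
    intro a b ha hb
    simp only [Set.mem_setOf_eq] at *
    rw [Matrix.mul_apply, Fin.sum_univ_two, ha, hb, zero_mul, mul_zero, add_zero]


/-! Every upper triangular matrix over a field either has equal diagonal entries or is conjugate,
by a unipotent `!![1, α; 0, 1]`, to a diagonal matrix; over `F₃` this gives four proper subrings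
covering `T₂(F₃)`. Conversely, a proper additive subgroup of a finite ring `R` has index at least
the least prime factor `p` of `|R|`, so `p` of them cover at most `1 + p * (|R| / p - 1) < |R|`
elements; for `|R| = 27` this rules out three subrings. -/

theorem AddSubgroup.card_sub_one_le_sum_of_forall_exists_mem {G ι : Type*} [AddGroup G]
    [Finite G] [Fintype ι] (H : ι → AddSubgroup G) (hcov : ∀ x, ∃ i, x ∈ H i) :
    Nat.card G - 1 ≤ ∑ i, (Nat.card (H i) - 1) := by
  have hsub : ({0}ᶜ : Set G) ⊆ ⋃ i, ((H i : Set G) \ {0}) := fun x hx => by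
    obtain ⟨i, hi⟩ := hcov x
    exact Set.mem_iUnion.2 ⟨i, hi, hx⟩
  calc Nat.card G - 1 = ({0}ᶜ : Set G).ncard := by rw [Set.ncard_compl, Set.ncard_singleton]
    _ ≤ ∑ i, ((H i : Set G) \ {0}).ncard :=
      (Set.ncard_le_ncard hsub).trans (Set.ncard_iUnion_le_of_fintype _)
    _ = ∑ i, (Nat.card (H i) - 1) := by
      congr! 1 with i
      rw [Set.ncard_sdiff_singleton_of_mem (H i).zero_mem]
      rfl

theorem AddSubgroup.card_le_card_div_minFac_of_ne_top {G : Type*} [AddGroup G] [Finite G]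
    {H : AddSubgroup G} (hH : H ≠ ⊤) : Nat.card H ≤ Nat.card G / (Nat.card G).minFac := by
  have hindex : (Nat.card G).minFac ≤ H.index :=
    Nat.minFac_le_of_dvd (H.one_lt_index_of_ne_top hH) H.index_dvd_card
  rw [Nat.le_div_iff_mul_le (Nat.minFac_pos _)]
  calc Nat.card H * (Nat.card G).minFac ≤ Nat.card H * H.index := Nat.mul_le_mul_left _ hindex
    _ = Nat.card G := by rw [mul_comm, H.index_mul_card]

theorem not_coversWith_minFac_card (R : Type*) [NonUnitalRing R] [Finite R] [Nontrivial R] :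
    ¬ CoversWith R (Nat.card R).minFac := by
  rintro ⟨c, hne, hcov⟩
  have hk : 2 ≤ (Nat.card R).minFac := (Nat.minFac_prime Finite.one_lt_card.ne').two_le
  have hkN : (Nat.card R).minFac ≤ Nat.card R := Nat.minFac_le Finite.card_pos
  have hsmall (i) : Nat.card (c i).toAddSubgroup - 1 ≤ Nat.card R / (Nat.card R).minFac - 1 :=
    Nat.sub_le_sub_right (AddSubgroup.card_le_card_div_minFac_of_ne_top
      (NonUnitalSubring.toAddSubgroup_eq_top.not.2 (hne i))) 1
  have : Nat.card R - 1 ≤ Nat.card R - (Nat.card R).minFac :=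
    calc Nat.card R - 1 ≤ ∑ i, (Nat.card (c i).toAddSubgroup - 1) :=
          AddSubgroup.card_sub_one_le_sum_of_forall_exists_mem (fun i => (c i).toAddSubgroup) hcov
      _ ≤ (Nat.card R).minFac * (Nat.card R / (Nat.card R).minFac - 1) := by
          simpa using Finset.sum_le_card_nsmul Finset.univ _ _ fun i _ => hsmall i
      _ = Nat.card R - (Nat.card R).minFac := by
          rw [Nat.mul_sub_one, Nat.mul_div_cancel' (Nat.minFac_dvd _)]
  omega

section UpperTriangular

variable (K : Type*) [CommRing K]

def equalDiagonalSubring : NonUnitalSubring (Matrix (Fin 2) (Fin 2) K) where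
  carrier := {A | A 1 0 = 0 ∧ A 0 0 = A 1 1}
  zero_mem' := ⟨rfl, rfl⟩
  add_mem' := by
    rintro A B ⟨hA, hA'⟩ ⟨hB, hB'⟩
    simp only [Set.mem_ofPred_eq, Matrix.add_apply, hA, hA', hB, hB', add_zero, and_self]
  neg_mem' := by
    rintro A ⟨hA, hA'⟩
    simp only [Set.mem_ofPred_eq, Matrix.neg_apply, hA, hA', neg_zero, and_self]
  mul_mem' := by
    rintro A B ⟨hA, hA'⟩ ⟨hB, hB'⟩
    simp only [Set.mem_ofPred_eq, Matrix.mul_apply, Fin.sum_univ_two, hA, hA', hB, hB']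
    constructor <;> ring

/-- The conjugate of the diagonal subring by `!![1, α; 0, 1]`, which maps `diag(a, c)` to
`!![a, α * (c - a); 0, c]`. -/
def conjDiagonalSubring (α : K) : NonUnitalSubring (Matrix (Fin 2) (Fin 2) K) where
  carrier := {A | A 1 0 = 0 ∧ A 0 1 = α * (A 1 1 - A 0 0)}
  zero_mem' := by simp
  add_mem' := by
    rintro A B ⟨hA, hA'⟩ ⟨hB, hB'⟩
    simp only [Set.mem_ofPred_eq, Matrix.add_apply, hA, hA', hB, hB', add_zero, true_and]
    ring
  neg_mem' := by
    rintro A ⟨hA, hA'⟩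
    simp only [Set.mem_ofPred_eq, Matrix.neg_apply, hA, hA', neg_zero, true_and]
    ring
  mul_mem' := by
    rintro A B ⟨hA, hA'⟩ ⟨hB, hB'⟩
    simp only [Set.mem_ofPred_eq, Matrix.mul_apply, Fin.sum_univ_two, hA, hA', hB, hB']
    constructor <;> ring

variable {K}

@[simp]
theorem mem_equalDiagonalSubring {A : Matrix (Fin 2) (Fin 2) K} :
    A ∈ equalDiagonalSubring K ↔ A 1 0 = 0 ∧ A 0 0 = A 1 1 :=
  Iff.rfl

@[simp]
theorem mem_conjDiagonalSubring {α : K} {A : Matrix (Fin 2) (Fin 2) K} :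
    A ∈ conjDiagonalSubring K α ↔ A 1 0 = 0 ∧ A 0 1 = α * (A 1 1 - A 0 0) :=
  Iff.rfl

end UpperTriangular

theorem mem_equalDiagonalSubring_or_exists_mem_conjDiagonalSubring {K : Type*} [Field K]
    {A : Matrix (Fin 2) (Fin 2) K} (hA : A 1 0 = 0) :
    A ∈ equalDiagonalSubring K ∨ ∃ α, A ∈ conjDiagonalSubring K α := by
  by_cases h : A 0 0 = A 1 1
  · exact Or.inl ⟨hA, h⟩
  · refine Or.inr ⟨A 0 1 / (A 1 1 - A 0 0), hA, ?_⟩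
    rw [div_mul_cancel₀ _ (sub_ne_zero.2 (Ne.symm h))]

theorem NonUnitalSubring.comap_subtype_ne_top {R : Type*} [NonUnitalRing R]
    {S T : NonUnitalSubring R} {x : R} (hxS : x ∈ S) (hxT : x ∉ T) :
    T.comap (NonUnitalSubringClass.subtype S) ≠ ⊤ := fun h =>
  hxT (show (⟨x, hxS⟩ : S) ∈ T.comap (NonUnitalSubringClass.subtype S) from h ▸ trivial)

theorem coversWith_T2F3_four : CoversWith T2F3 4 := by
  refine ⟨fun i => (![equalDiagonalSubring _, conjDiagonalSubring _ 0, conjDiagonalSubring _ 1,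
    conjDiagonalSubring _ 2] i).comap (NonUnitalSubringClass.subtype T2F3), ?_, ?_⟩
  · have hE : !![0, 1; 0, 0] ∈ T2F3 := rfl
    have hF : !![0, 0; 0, 1] ∈ T2F3 := rfl
    intro i
    fin_cases i
    · exact NonUnitalSubring.comap_subtype_ne_top hF (by simp)
    all_goals exact NonUnitalSubring.comap_subtype_ne_top hE (by simp)
  · intro x
    rcases mem_equalDiagonalSubring_or_exists_mem_conjDiagonalSubring x.2 with h | ⟨α, h⟩
    · exact ⟨0, h⟩
    · fin_cases α
      exacts [⟨1, h⟩, ⟨2, h⟩, ⟨3, h⟩]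

theorem card_T2F3 : Nat.card T2F3 = 27 := by
  let e : T2F3 ≃ ZMod 3 × ZMod 3 × ZMod 3 :=
    { toFun A := (A.1 0 0, A.1 0 1, A.1 1 1)
      invFun p := ⟨!![p.1, p.2.1; 0, p.2.2], rfl⟩
      left_inv A := by
        ext i j
        fin_cases i <;> fin_cases j
        exacts [rfl, rfl, A.2.symm, rfl]
      right_inv _ := rfl }
  simp [Nat.card_congr e]

/-- The covering number of `T₂(F₃)` is 4. -/
theorem covering_number_T2F3_eq_four :
    CoversWith T2F3 4 ∧ ¬ CoversWith T2F3 3 := by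
  have : Nontrivial T2F3 := Finite.one_lt_card_iff_nontrivial.1 (by rw [card_T2F3]; norm_num)
  have hminFac : (Nat.card T2F3).minFac = 3 := by rw [card_T2F3]; norm_num
  exact ⟨coversWith_T2F3_four, by simpa only [hminFac] using not_coversWith_minFac_card T2F3⟩
end

section
/- Let R be a finite unital ring and suppose R = S_1 ∪ ... ∪ S_n is a cover by proper subrings such that no S_i is contained in the union of the others. Then the index of S := S_1 ∩ ... ∩ S_n as an additive subgroup of R satisfies [R : S] ≤ n!. -/
/-!
Fix a set `T` of indices and set `E := ⋂_{i ∈ T} H i`. Irredundancy gives an `x` outside every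
`H j`, `j ∈ T`; then `x E` is covered by the `H i` with `i ∉ T`, so `E` is covered by at most
`|Tᶜ|` left cosets of the subgroups `H i ∩ E`. By B. H. Neumann's lemma one of them has index
at most `|Tᶜ|` in `E`. Adding that index to `T` and inducting on `|Tᶜ|` bounds the index of the
full intersection by `|ι|!`.
-/

open scoped Nat Pointwise

namespace Subgroup

variable {G ι : Type*} [Group G]

@[to_additive]
theorem exists_mem_leftCoset_subgroupOf_of_mul_mem (K L : Subgroup G) (x : G) :
    ∃ g : K, ∀ e : K, x * e ∈ L → e ∈ g • (L.subgroupOf K : Set K) := by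
  by_cases h : ∃ e : K, x * e ∈ L
  · obtain ⟨g, hg⟩ := h
    refine ⟨g, fun e he => ?_⟩
    rw [mem_leftCoset_iff, SetLike.mem_coe, mem_subgroupOf]
    simpa [mul_assoc] using L.mul_mem (L.inv_mem hg) he
  · exact ⟨1, fun e he => (h ⟨e, he⟩).elim⟩

variable {H : ι → Subgroup G}

@[to_additive]
theorem exists_notMem_relIndex_biInf_le_card_compl [Fintype ι] [DecidableEq ι]
    (hcover : ∀ g, ∃ i, g ∈ H i) {T : Finset ι} {x : G} (hx : ∀ j ∈ T, x ∉ H j) :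
    ∃ k ∉ T, (H k).relIndex (⨅ i ∈ T, H i) ≤ Tᶜ.card := by
  set E := ⨅ i ∈ T, H i
  choose g hg using fun i => exists_mem_leftCoset_subgroupOf_of_mul_mem E (H i) x
  have hcosets : ⋃ i ∈ Tᶜ, g i • ((H i).subgroupOf E : Set E) = Set.univ := by
    refine Set.eq_univ_of_forall fun e => Set.mem_iUnion₂.mpr ?_
    obtain ⟨i, hi⟩ := hcover (x * e)
    have hiT : i ∉ T := fun hiT => by
      have he : (e : G) ∈ H i := (biInf_le _ hiT : E ≤ H i) e.2
      exact hx i hiT (by simpa using (H i).mul_mem hi ((H i).inv_mem he))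
    exact ⟨i, Finset.mem_compl.mpr hiT, hg i e hi⟩
  obtain ⟨k, hk, -, hle⟩ := exists_index_le_card_of_leftCoset_cover hcosets
  exact ⟨k, Finset.mem_compl.mp hk, hle⟩

@[to_additive]
theorem relIndex_biInf_le_factorial_card_compl [Fintype ι] [DecidableEq ι]
    (hcover : ∀ g, ∃ i, g ∈ H i) (hirr : ∀ i, ∃ x, ∀ j, j ≠ i → x ∉ H j) (T : Finset ι) :
    (⨅ i, H i).relIndex (⨅ i ∈ T, H i) ≤ (Tᶜ.card)! := by
  induction hm : Tᶜ.card generalizing T with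
  | zero =>
    obtain rfl : T = Finset.univ := by simpa using hm
    simp
  | succ m ih =>
    obtain ⟨i₀, hi₀⟩ : Tᶜ.Nonempty := Finset.card_pos.mp (by omega)
    obtain ⟨x, hx⟩ := hirr i₀
    obtain ⟨k, hkT, hk⟩ := exists_notMem_relIndex_biInf_le_card_compl hcover
      (T := T) fun j hj => hx j (by rintro rfl; exact Finset.mem_compl.mp hi₀ hj)
    have hcard : (insert k T)ᶜ.card = m := by
      rw [Finset.card_compl, Finset.card_insert_of_notMem hkT, ← Nat.sub_sub,
        ← Finset.card_compl, hm, Nat.add_sub_cancel]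
    have hinsert : ⨅ i ∈ insert k T, H i = H k ⊓ ⨅ i ∈ T, H i := Finset.iInf_insert _ _ _
    calc (⨅ i, H i).relIndex (⨅ i ∈ T, H i)
        = (⨅ i, H i).relIndex (⨅ i ∈ insert k T, H i)
          * (⨅ i ∈ insert k T, H i).relIndex (⨅ i ∈ T, H i) :=
          (relIndex_mul_relIndex _ _ _ (le_iInf₂ fun i _ => iInf_le H i)
            (hinsert ▸ inf_le_right)).symm
      _ ≤ m ! * (m + 1) := Nat.mul_le_mul (ih _ hcard)
          (by rw [hinsert, inf_relIndex_right]; exact hk.trans_eq hm)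
      _ = (m + 1)! := by rw [Nat.factorial_succ, mul_comm]

@[to_additive]
theorem index_iInf_le_factorial_card [Fintype ι]
    (hcover : ∀ g, ∃ i, g ∈ H i) (hirr : ∀ i, ∃ x, ∀ j, j ≠ i → x ∉ H j) :
    (⨅ i, H i).index ≤ (Fintype.card ι)! := by
  classical
  simpa [relIndex_top_right] using relIndex_biInf_le_factorial_card_compl hcover hirr ∅

end Subgroup

theorem index_of_intersection_le_factorial_general (R : Type*) [Ring R]
    (n : ℕ) (S : Fin n → NonUnitalSubring R)
    (hcover : ∀ x : R, ∃ i, x ∈ S i)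
    (hirr : ∀ i, ∃ x ∈ S i, ∀ j, j ≠ i → x ∉ S j) :
    (⨅ i, (S i).toAddSubgroup).index ≤ n ! := by
  simpa using AddSubgroup.index_iInf_le_factorial_card (H := fun i => (S i).toAddSubgroup)
    hcover fun i => (hirr i).imp fun _ hx => hx.2

/-- If a finite unital ring `R` is covered irredundantly by `n` proper subrings, then
the index of the intersection of the subrings, as an additive subgroup, is at most `n!`. -/
theorem index_of_intersection_le_factorial (R : Type*) [Ring R] [Finite R]
    (n : ℕ) (S : Fin n → NonUnitalSubring R)
    (hproper : ∀ i, S i ≠ ⊤)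
    (hcover : ∀ x : R, ∃ i, x ∈ S i)
    (hirr : ∀ i, ∃ x ∈ S i, ∀ j, j ≠ i → x ∉ S j) :
    (⨅ i, (S i).toAddSubgroup).index ≤ n ! :=
  index_of_intersection_le_factorial_general R n S hcover hirr
end

section
/- Let R be a unital ring of characteristic p^f with p prime and f ≥ 1, and let S be a maximal proper subring of R. Then pR ⊆ S. -/
/-!
If `pR ⊄ S`, then `S + pR` is a subring strictly larger than `S`, hence all of `R`. Feeding
`R = S + pR` back into itself gives `R = S + p^k R` for every `k`, because `p^k S ⊆ S`; since
`p^f = 0` in `R`, this says `R = S`, contradicting properness.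
-/

namespace NonUnitalSubring

variable {R : Type*} [Ring R]

/-- The nonunital subring `S + nR`. -/
def addNatMul (S : NonUnitalSubring R) (n : ℕ) : NonUnitalSubring R where
  carrier := {x | ∃ s ∈ S, ∃ r : R, s + n * r = x}
  add_mem' := by
    rintro _ _ ⟨s, hs, r, rfl⟩ ⟨s', hs', r', rfl⟩
    exact ⟨s + s', S.add_mem hs hs', r + r', by noncomm_ring⟩
  zero_mem' := ⟨0, S.zero_mem, 0, by simp⟩
  neg_mem' := by
    rintro _ ⟨s, hs, r, rfl⟩
    exact ⟨-s, S.neg_mem hs, -r, by noncomm_ring⟩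
  mul_mem' := by
    rintro _ _ ⟨s, hs, r, rfl⟩ ⟨s', hs', r', rfl⟩
    refine ⟨s * s', S.mul_mem hs hs', s * r' + r * s' + r * (n * r'), ?_⟩
    rw [add_mul, mul_add s, (Nat.cast_commute n s).symm.left_comm]
    noncomm_ring

variable {S : NonUnitalSubring R} {n : ℕ}

theorem mem_addNatMul {x : R} : x ∈ S.addNatMul n ↔ ∃ s ∈ S, ∃ r : R, s + n * r = x :=
  Iff.rfl

theorem le_addNatMul : S ≤ S.addNatMul n :=
  fun s hs => ⟨s, hs, 0, by simp⟩

theorem natCast_mul_mem_addNatMul (r : R) : (n : R) * r ∈ S.addNatMul n :=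
  ⟨0, S.zero_mem, r, zero_add _⟩

theorem exists_add_natCast_pow_mul_of_addNatMul_eq_top (h : S.addNatMul n = ⊤) (k : ℕ) (x : R) :
    ∃ s ∈ S, ∃ r : R, s + (n : R) ^ k * r = x := by
  induction k generalizing x with
  | zero => exact ⟨0, S.zero_mem, x, by simp⟩
  | succ k ih =>
    obtain ⟨s, hs, r, rfl⟩ := ih x
    obtain ⟨s', hs', r', rfl⟩ := mem_addNatMul.1 (h ▸ mem_top r)
    have hs'' : (n : R) ^ k * s' ∈ S := by
      simpa only [← Nat.cast_pow, ← nsmul_eq_mul] using nsmul_mem hs' (n ^ k)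
    exact ⟨s + (n : R) ^ k * s', S.add_mem hs hs'', r', by rw [pow_succ]; noncomm_ring⟩

theorem eq_top_of_addNatMul_eq_top (h : S.addNatMul n = ⊤) (hn : IsNilpotent (n : R)) :
    S = ⊤ := by
  obtain ⟨k, hk⟩ := hn
  refine eq_top_iff.2 fun x _ => ?_
  obtain ⟨s, hs, r, rfl⟩ := exists_add_natCast_pow_mul_of_addNatMul_eq_top h k x
  simpa [hk] using hs

theorem natCast_mul_mem_of_maximal (hS : S ≠ ⊤) (hmax : ∀ T : NonUnitalSubring R, S < T → T = ⊤)
    (hn : IsNilpotent (n : R)) (r : R) : (n : R) * r ∈ S := by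
  by_contra hr
  have hlt : S < S.addNatMul n :=
    lt_of_le_of_ne le_addNatMul fun h => hr (h ▸ natCast_mul_mem_addNatMul r)
  exact hS (eq_top_of_addNatMul_eq_top (hmax _ hlt) hn)

end NonUnitalSubring

theorem pR_subset_maximal_subring_general (R : Type*) [Ring R] (p f : ℕ)
    [CharP R (p ^ f)] (S : NonUnitalSubring R)
    (hS : S ≠ ⊤) (hmax : ∀ T : NonUnitalSubring R, S < T → T = ⊤) :
    ∀ r : R, (p : R) * r ∈ S :=
  NonUnitalSubring.natCast_mul_mem_of_maximal hS hmax
    ⟨f, by rw [← Nat.cast_pow, CharP.cast_eq_zero]⟩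

/-- If `R` is a unital ring of characteristic `p^f` (`p` prime, `f ≥ 1`) and `S` is a
maximal proper subring of `R` (subrings need not contain 1), then `pR ⊆ S`. -/
theorem pR_subset_maximal_subring (R : Type*) [Ring R] (p f : ℕ) (hp : p.Prime)
    (hf : 1 ≤ f) [CharP R (p ^ f)] (S : NonUnitalSubring R)
    (hS : S ≠ ⊤) (hmax : ∀ T : NonUnitalSubring R, S < T → T = ⊤) :
    ∀ r : R, (p : R) * r ∈ S :=
  pR_subset_maximal_subring_general R p f S hS hmax
end

section
/- A finite non-cyclic abelian p-group cannot be written as the union of p or fewer proper subgroups. -/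
/-- A finite non-cyclic abelian `p`-group cannot be written as the union of `p` or fewer
proper subgroups. -/
theorem noncyclic_abelian_p_group_not_union_of_p_subgroups
    (G : Type*) [CommGroup G] [Finite G] (p : ℕ) (hp : p.Prime)
    (hcard : ∃ k : ℕ, Nat.card G = p ^ k) (hnc : ¬ IsCyclic G)
    (H : Fin p → Subgroup G) (hH : ∀ i, H i ≠ ⊤) :
    ¬ (∀ x : G, ∃ i, x ∈ H i) := by
  intro hcov
  classical
  obtain ⟨k, hk⟩ := hcard
  haveI : Fintype G := Fintype.ofFinite G
  have hnt : Nontrivial G := by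
    by_contra h
    rw [not_nontrivial_iff_subsingleton] at h
    exact hnc isCyclic_of_subsingleton
  have hG1 : 1 < Nat.card G := Finite.one_lt_card
  have hk1 : 1 ≤ k := by
    rcases Nat.eq_zero_or_pos k with h0 | h
    · rw [h0, pow_zero] at hk; omega
    · exact h
  -- each H i has card ≤ p ^ (k - 1)
  have hle : ∀ i, Nat.card (H i) ≤ p ^ (k - 1) := by
    intro i
    have hdvd : Nat.card (H i) ∣ p ^ k := hk ▸ Subgroup.card_subgroup_dvd_card (H i)
    obtain ⟨m, hm, hmeq⟩ := (Nat.dvd_prime_pow hp).mp hdvd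
    have hne : Nat.card (H i) ≠ Nat.card G := fun h =>
      hH i (Subgroup.eq_top_of_card_eq _ h)
    have hmk : m ≠ k := by
      intro h; exact hne (by rw [hmeq, h, hk])
    rw [hmeq]
    exact Nat.pow_le_pow_right hp.pos (by omega)
  have hcard_s : ∀ i, ((H i : Set G).toFinset.erase 1).card ≤ p ^ (k - 1) - 1 := by
    intro i
    have h1 : (1 : G) ∈ (H i : Set G).toFinset := by simpa using (H i).one_mem
    rw [Finset.card_erase_of_mem h1]
    have heq : (H i : Set G).toFinset.card = Nat.card (H i) := by
      rw [Set.toFinset_card, Nat.card_eq_fintype_card]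
      rfl
    have := hle i
    omega
  have hsub : Finset.univ.erase (1 : G) ⊆
      Finset.univ.biUnion (fun i => (H i : Set G).toFinset.erase 1) := by
    intro x hx
    obtain ⟨i, hi⟩ := hcov x
    simp only [Finset.mem_erase, Finset.mem_univ, and_true, Finset.mem_biUnion,
      Set.mem_toFinset, SetLike.mem_coe] at hx ⊢
    exact ⟨i, trivial, hx, hi⟩
  have h1 := Finset.card_le_card hsub
  have h2 := Finset.card_biUnion_le (s := Finset.univ)
    (t := fun i => (H i : Set G).toFinset.erase 1)
  have h3 : ∑ i : Fin p, ((H i : Set G).toFinset.erase 1).card ≤ p * p ^ (k - 1) - p := by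
    calc ∑ i : Fin p, ((H i : Set G).toFinset.erase 1).card
        ≤ ∑ _i : Fin p, (p ^ (k - 1) - 1) := Finset.sum_le_sum fun i _ => hcard_s i
      _ = p * p ^ (k - 1) - p := by
          rw [Finset.sum_const, Finset.card_univ, Fintype.card_fin, smul_eq_mul,
            Nat.mul_sub, mul_one]
  have h4 : (Finset.univ.erase (1 : G)).card = p ^ k - 1 := by
    rw [Finset.card_erase_of_mem (Finset.mem_univ 1), Finset.card_univ,
      ← Nat.card_eq_fintype_card, hk]
  have hpk : p ^ k = p * p ^ (k - 1) := by
    conv_lhs => rw [show k = 1 + (k - 1) by omega, pow_add, pow_one]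
  have hpk1 : 1 ≤ p ^ (k - 1) := Nat.one_le_pow _ _ hp.pos
  have hp2 : 2 ≤ p := hp.two_le
  omega
end

section
/- Let R_1 and R_2 be finite unital rings such that no nonzero ring is simultaneously a quotient of R_1 and of R_2 (i.e., there are no proper ideals I_1 ⊆ R_1, I_2 ⊆ R_2 with R_1/I_1 ≅ R_2/I_2 nonzero). Then every maximal subring of R_1 × R_2 has the form M_1 × R_2 or R_1 × M_2, where M_i is a maximal subring of R_i. -/
/-!
Let `A₁`, `A₂` be the projections of a maximal subring `T`, so `T ≤ A₁ × A₂`. If equality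
holds, maximality forces one factor to be everything and the other to be maximal. Otherwise
`A₁ × A₂` is the whole ring, i.e. `T` projects onto both factors. Then `J = {y | (0, y) ∈ T}`
is a two-sided ideal of `R₂`, proper since `T` is, and `x ↦ y mod J` for `(x, y) ∈ T` is a
well-defined surjective unital homomorphism `R₁ → R₂ / J`: a common nonzero quotient.
-/

open Function

theorem IsCoatom.of_map {α β : Type*} [PartialOrder α] [OrderTop α] [PartialOrder β]
    [OrderTop β] {φ : α → β} (hφ : Monotone φ) (hinj : Injective φ) (htop : φ ⊤ = ⊤) {a : α}
    (h : IsCoatom (φ a)) : IsCoatom a :=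
  ⟨fun ha => h.1 (ha ▸ htop),
    fun _ hab => hinj ((h.2 _ (hφ.strictMono_of_injective hinj hab)).trans htop.symm)⟩

namespace NonUnitalSubring

section Product

variable {R S : Type*} [NonUnitalRing R] [NonUnitalRing S]

theorem le_prod_map_fst_map_snd (T : NonUnitalSubring (R × S)) :
    T ≤ (T.map (NonUnitalRingHom.fst R S)).prod (T.map (NonUnitalRingHom.snd R S)) :=
  fun p hp => ⟨⟨p, hp, rfl⟩, ⟨p, hp, rfl⟩⟩

theorem prod_eq_top_iff {s : NonUnitalSubring R} {t : NonUnitalSubring S} :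
    s.prod t = ⊤ ↔ s = ⊤ ∧ t = ⊤ := by
  refine ⟨fun h => ⟨eq_top_iff.2 fun x _ => ?_, eq_top_iff.2 fun y _ => ?_⟩,
    fun h => h.1 ▸ h.2 ▸ top_prod_top⟩
  · exact (mem_prod.1 (h ▸ mem_top (x, (0 : S)))).1
  · exact (mem_prod.1 (h ▸ mem_top ((0 : R), y))).2

theorem prod_left_injective (t : NonUnitalSubring S) :
    Injective fun s : NonUnitalSubring R => s.prod t := fun s s' h => by
  ext x
  simpa [mem_prod] using SetLike.ext_iff.1 h (x, 0)

theorem prod_right_injective (s : NonUnitalSubring R) :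
    Injective fun t : NonUnitalSubring S => s.prod t := fun t t' h => by
  ext y
  simpa [mem_prod] using SetLike.ext_iff.1 h (0, y)

theorem eq_top_and_isCoatom_or_of_isCoatom_prod {s : NonUnitalSubring R}
    {t : NonUnitalSubring S} (h : IsCoatom (s.prod t)) :
    (s = ⊤ ∧ IsCoatom t) ∨ (IsCoatom s ∧ t = ⊤) := by
  by_cases hs : s = ⊤
  · subst hs
    exact Or.inl ⟨rfl, h.of_map (prod_mono_right ⊤) (prod_right_injective ⊤) top_prod_top⟩
  by_cases ht : t = ⊤
  · subst ht
    exact Or.inr ⟨h.of_map (prod_mono_left ⊤) (prod_left_injective ⊤) top_prod_top, rfl⟩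
  have : s.prod ⊤ = ⊤ :=
    h.2 _ ((prod_mono_right s).strictMono_of_injective (prod_right_injective s) (Ne.lt_top ht))
  exact absurd (prod_eq_top_iff.1 this).1 hs

theorem map_fst_eq_top_iff {T : NonUnitalSubring (R × S)} :
    T.map (NonUnitalRingHom.fst R S) = ⊤ ↔ ∀ x, ∃ y, (x, y) ∈ T := by
  simp [eq_top_iff, SetLike.le_def, mem_map]

theorem map_snd_eq_top_iff {T : NonUnitalSubring (R × S)} :
    T.map (NonUnitalRingHom.snd R S) = ⊤ ↔ ∀ y, ∃ x, (x, y) ∈ T := by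
  simp [eq_top_iff, SetLike.le_def, mem_map]

end Product

section Goursat

variable {R₁ R₂ : Type*} [Ring R₁] [Ring R₂] (T : NonUnitalSubring (R₁ × R₂))

def sndKernel (h₂ : ∀ y : R₂, ∃ x, (x, y) ∈ T) : TwoSidedIdeal R₂ :=
  TwoSidedIdeal.mk' {y | ((0 : R₁), y) ∈ T} T.zero_mem
    (fun hy hz => by simpa using T.add_mem hy hz)
    (fun hy => by simpa using T.neg_mem hy)
    (fun {z _} hy => by obtain ⟨x, hx⟩ := h₂ z; simpa using T.mul_mem hx hy)
    (fun {_ z} hy => by obtain ⟨x, hx⟩ := h₂ z; simpa using T.mul_mem hy hx)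

variable {T}

theorem mem_sndKernel {h₂ : ∀ y : R₂, ∃ x, (x, y) ∈ T} {y : R₂} :
    y ∈ T.sndKernel h₂ ↔ ((0 : R₁), y) ∈ T :=
  TwoSidedIdeal.mem_mk' ..

theorem coe_eq_coe_of_mem {h₂ : ∀ y : R₂, ∃ x, (x, y) ∈ T} {x : R₁} {y y' : R₂}
    (hy : (x, y) ∈ T) (hy' : (x, y') ∈ T) : (y : (T.sndKernel h₂).ringCon.Quotient) = y' :=
  (RingCon.eq _).2 <| (TwoSidedIdeal.rel_iff _ _ _).2 <| mem_sndKernel.2 <| by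
    simpa using T.sub_mem hy hy'

theorem coe_eq_one_of_mem (h₂ : ∀ y : R₂, ∃ x, (x, y) ∈ T) {y : R₂} (hy : ((1 : R₁), y) ∈ T) :
    (y : (T.sndKernel h₂).ringCon.Quotient) = 1 := by
  obtain ⟨x, hx⟩ := h₂ 1
  have hxy : (x, y) ∈ T := by simpa using T.mul_mem hy hx
  exact coe_eq_coe_of_mem hxy hx

noncomputable def fstToQuotient (h₁ : ∀ x : R₁, ∃ y, (x, y) ∈ T)
    (h₂ : ∀ y : R₂, ∃ x, (x, y) ∈ T) : R₁ →+* (T.sndKernel h₂).ringCon.Quotient where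
  toFun x := ((h₁ x).choose : R₂)
  map_one' := coe_eq_one_of_mem h₂ (h₁ 1).choose_spec
  map_mul' x x' :=
    coe_eq_coe_of_mem (h₁ _).choose_spec (T.mul_mem (h₁ x).choose_spec (h₁ x').choose_spec)
  map_zero' := coe_eq_coe_of_mem (h₁ 0).choose_spec T.zero_mem
  map_add' x x' :=
    coe_eq_coe_of_mem (h₁ _).choose_spec (T.add_mem (h₁ x).choose_spec (h₁ x').choose_spec)

theorem fstToQuotient_surjective (h₁ : ∀ x : R₁, ∃ y, (x, y) ∈ T)
    (h₂ : ∀ y : R₂, ∃ x, (x, y) ∈ T) : Surjective (T.fstToQuotient h₁ h₂) := by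
  rintro ⟨y⟩
  obtain ⟨x, hx⟩ := h₂ y
  exact ⟨x, coe_eq_coe_of_mem (h₁ x).choose_spec hx⟩

theorem nontrivial_quotient_sndKernel (hT : T ≠ ⊤) (h₁ : ∀ x : R₁, ∃ y, (x, y) ∈ T)
    (h₂ : ∀ y : R₂, ∃ x, (x, y) ∈ T) :
    Nontrivial (T.sndKernel h₂).ringCon.Quotient := by
  obtain ⟨⟨x, y⟩, -, hxy⟩ := SetLike.exists_of_lt hT.lt_top
  obtain ⟨y', hy'⟩ := h₁ x
  refine ⟨⟨y - y', 0, fun h => hxy ?_⟩⟩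
  have : ((0 : R₁), y - y') ∈ T := by
    simpa using mem_sndKernel.1 ((TwoSidedIdeal.rel_iff _ _ _).1 ((RingCon.eq _).1 h))
  simpa using T.add_mem this hy'

end Goursat

end NonUnitalSubring

theorem RingHom.not_surjective_and_surjective_of_finite {R₁ R₂ A : Type*} [Ring R₁] [Ring R₂]
    [Ring A] [_root_.Finite A] [Nontrivial A]
    (hquot : ∀ (B : Type) [Ring B], Nontrivial B →
      ∀ (f : R₁ →+* B) (g : R₂ →+* B), ¬ (Surjective f ∧ Surjective g))
    (f : R₁ →+* A) (g : R₂ →+* A) : ¬ (Surjective f ∧ Surjective g) := fun ⟨hf, hg⟩ =>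
  let e := (Shrink.ringEquiv.{0} A).symm
  hquot _ e.symm.toEquiv.nontrivial (e.toRingHom.comp f) (e.toRingHom.comp g)
    ⟨e.surjective.comp hf, e.surjective.comp hg⟩

theorem maximal_subring_of_product_general (R₁ R₂ : Type*) [Ring R₁] [Ring R₂]
    [Finite R₂]
    (hquot : ∀ (A : Type) [Ring A], Nontrivial A →
      ∀ (f : R₁ →+* A) (g : R₂ →+* A),
        ¬ (Function.Surjective f ∧ Function.Surjective g))
    (T : NonUnitalSubring (R₁ × R₂)) (hT : T ≠ ⊤) (hTmax : ∀ N, T < N → N = ⊤) :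
    (∃ M₁ : NonUnitalSubring R₁, (M₁ ≠ ⊤ ∧ ∀ N, M₁ < N → N = ⊤) ∧
        (T : Set (R₁ × R₂)) = (M₁ : Set R₁) ×ˢ (Set.univ : Set R₂)) ∨
    (∃ M₂ : NonUnitalSubring R₂, (M₂ ≠ ⊤ ∧ ∀ N, M₂ < N → N = ⊤) ∧
        (T : Set (R₁ × R₂)) = (Set.univ : Set R₁) ×ˢ (M₂ : Set R₂)) := by
  have hcoatom : IsCoatom T := ⟨hT, hTmax⟩
  rcases T.le_prod_map_fst_map_snd.eq_or_lt with hprod | hlt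
  · rw [hprod] at hcoatom ⊢
    rcases NonUnitalSubring.eq_top_and_isCoatom_or_of_isCoatom_prod hcoatom with
      ⟨h₁, h₂⟩ | ⟨h₁, h₂⟩
    · exact Or.inr ⟨_, h₂, by rw [NonUnitalSubring.coe_prod, h₁, NonUnitalSubring.coe_top]⟩
    · exact Or.inl ⟨_, h₁, by rw [NonUnitalSubring.coe_prod, h₂, NonUnitalSubring.coe_top]⟩
  · obtain ⟨h₁, h₂⟩ := NonUnitalSubring.prod_eq_top_iff.1 (hcoatom.2 _ hlt)
    rw [NonUnitalSubring.map_fst_eq_top_iff] at h₁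
    rw [NonUnitalSubring.map_snd_eq_top_iff] at h₂
    have := T.nontrivial_quotient_sndKernel hT h₁ h₂
    have : Finite (T.sndKernel h₂).ringCon.Quotient := Quotient.finite _
    exact RingHom.not_surjective_and_surjective_of_finite hquot _ _
      ⟨T.fstToQuotient_surjective h₁ h₂, RingCon.mk'_surjective _⟩ |>.elim

/-- Let `R₁`, `R₂` be finite unital rings with no common nonzero quotient ring. Then every
maximal subring of `R₁ × R₂` is of the form `M₁ × R₂` or `R₁ × M₂` with `Mᵢ` a maximal
subring of `Rᵢ`. Subrings need not contain the identity. -/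
theorem maximal_subring_of_product (R₁ R₂ : Type*) [Ring R₁] [Ring R₂]
    [Finite R₁] [Finite R₂]
    (hquot : ∀ (A : Type) [Ring A], Nontrivial A →
      ∀ (f : R₁ →+* A) (g : R₂ →+* A),
        ¬ (Function.Surjective f ∧ Function.Surjective g))
    (T : NonUnitalSubring (R₁ × R₂)) (hT : T ≠ ⊤) (hTmax : ∀ N, T < N → N = ⊤) :
    (∃ M₁ : NonUnitalSubring R₁, (M₁ ≠ ⊤ ∧ ∀ N, M₁ < N → N = ⊤) ∧
        (T : Set (R₁ × R₂)) = (M₁ : Set R₁) ×ˢ (Set.univ : Set R₂)) ∨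
    (∃ M₂ : NonUnitalSubring R₂, (M₂ ≠ ⊤ ∧ ∀ N, M₂ < N → N = ⊤) ∧
        (T : Set (R₁ × R₂)) = (Set.univ : Set R₁) ×ˢ (M₂ : Set R₂)) :=
  maximal_subring_of_product_general R₁ R₂ hquot T hT hTmax
end

section
/- Among the unital rings of order p² (p prime), namely Z/p², F_{p²}, F_p[t]/(t²), and F_p × F_p, the only one that is a union of finitely many proper subrings is F_2 × F_2. -/
/-!
A ring generated, as a non-unital ring, by one element `x` is not coverable: the subring of the
cover containing `x` would be everything. In a finite ring a unit `u` has `u ^ k = 1` for some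
`k > 0`, so the non-unital subring generated by `u` contains `1` and is the subring generated by
`u`. Hence it suffices to exhibit a unit generating the ring as a ring: `1` in `ℤ/p²`, a generator
of the cyclic group `F_{p²}ˣ`, `1 + ε` in `F_p[ε]`, and `(1, 2)` in `F_p × F_p` for odd `p`.
Conversely `F₂ × F₂` is the union of the diagonal and the two coordinate axes.
-/

/-- `R` is the union of finitely many proper subrings (subrings need not contain 1). -/
def Coverable (R : Type*) [NonUnitalRing R] : Prop :=
  ∃ (n : ℕ) (c : Fin n → NonUnitalSubring R), (∀ i, c i ≠ ⊤) ∧ ∀ x : R, ∃ i, x ∈ c i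

theorem not_coverable_of_closure_singleton_eq_top {R : Type*} [NonUnitalRing R] {x : R}
    (hx : NonUnitalSubring.closure {x} = ⊤) : ¬ Coverable R := by
  rintro ⟨n, c, hproper, hcover⟩
  obtain ⟨i, hi⟩ := hcover x
  exact hproper i <| top_unique <|
    hx ▸ NonUnitalSubring.closure_le.2 (Set.singleton_subset_iff.2 hi)

namespace NonUnitalSubring

variable {R : Type*} [Ring R]

theorem pow_succ_mem (S : NonUnitalSubring R) {x : R} (hx : x ∈ S) (n : ℕ) : x ^ (n + 1) ∈ S := by
  induction n with
  | zero => simpa using hx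
  | succ n ih => rw [pow_succ]; exact S.mul_mem ih hx

theorem one_mem_closure_singleton_of_isUnit [Finite R] {x : R} (hx : IsUnit x) :
    (1 : R) ∈ closure {x} := by
  obtain ⟨u, rfl⟩ := hx
  obtain ⟨n, hn⟩ := Nat.exists_eq_add_one_of_ne_zero (orderOf_pos u).ne'
  have hpow : (u : R) ^ (n + 1) = 1 := by
    rw [← hn, ← Units.val_pow_eq_pow_val, pow_orderOf_eq_one, Units.val_one]
  have hmem := pow_succ_mem (closure {(u : R)}) (subset_closure (Set.mem_singleton _)) n
  rwa [hpow] at hmem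

theorem closure_singleton_eq_top_of_isUnit [Finite R] {x : R} (hx : IsUnit x)
    (h : Subring.closure {x} = ⊤) : closure {x} = ⊤ := by
  let S := (closure {x}).toSubring (one_mem_closure_singleton_of_isUnit hx)
  have hle : Subring.closure {x} ≤ S :=
    Subring.closure_le.2 (Set.singleton_subset_iff.2 (subset_closure (Set.mem_singleton _)))
  exact top_unique fun y _ => hle (h ▸ Subring.mem_top y)

end NonUnitalSubring

theorem not_coverable_of_isUnit_of_subring_closure_eq_top {R : Type*} [Ring R] [Finite R] {x : R}
    (hx : IsUnit x) (h : Subring.closure {x} = ⊤) : ¬ Coverable R :=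
  not_coverable_of_closure_singleton_eq_top
    (NonUnitalSubring.closure_singleton_eq_top_of_isUnit hx h)

theorem ZMod.subring_eq_top {n : ℕ} (S : Subring (ZMod n)) : S = ⊤ :=
  top_unique fun y _ => ZMod.intCast_zmod_cast y ▸ intCast_mem S _

theorem Subring.zmod_smul_mem {n : ℕ} {R : Type*} [Ring R] [Module (ZMod n) R] (S : Subring R)
    (c : ZMod n) {y : R} (hy : y ∈ S) : c • y ∈ S :=
  (AddSubgroup.toZModSubmodule n S.toAddSubgroup).smul_mem c hy

theorem Subring.closure_singleton_eq_top_of_forall_mem_zpowers {F : Type*} [Field F] [Finite F]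
    {g : Fˣ} (hg : ∀ u, u ∈ Subgroup.zpowers g) : Subring.closure {(g : F)} = ⊤ := by
  refine top_unique fun y _ => ?_
  rcases eq_or_ne y 0 with rfl | hy
  · exact zero_mem _
  obtain ⟨k, hk⟩ := mem_powers_iff_mem_zpowers.2 (hg (Units.mk0 y hy))
  have hy' : y = (g : F) ^ k := by
    rw [← Units.val_pow_eq_pow_val, show g ^ k = Units.mk0 y hy from hk, Units.val_mk0]
  rw [hy']
  exact Subring.pow_mem _ (Subring.subset_closure (Set.mem_singleton _)) k

open DualNumber in
theorem DualNumber.subring_closure_one_add_eps_eq_top (n : ℕ) :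
    Subring.closure {(1 + ε : DualNumber (ZMod n))} = ⊤ := by
  set S := Subring.closure {(1 + ε : DualNumber (ZMod n))}
  have heps : ε ∈ S := by
    simpa using S.sub_mem (Subring.subset_closure (Set.mem_singleton _)) S.one_mem
  refine top_unique fun y _ => ?_
  have hy : y = y.fst • 1 + y.snd • ε := by ext <;> simp
  rw [hy]
  exact S.add_mem (S.zmod_smul_mem _ S.one_mem) (S.zmod_smul_mem _ heps)

theorem ZMod.prod_subring_closure_one_two_eq_top (n : ℕ) :
    Subring.closure {((1, 2) : ZMod n × ZMod n)} = ⊤ := by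
  set S := Subring.closure {((1, 2) : ZMod n × ZMod n)}
  have h01 : ((0, 1) : ZMod n × ZMod n) ∈ S := by
    convert S.sub_mem (Subring.subset_closure (Set.mem_singleton _)) S.one_mem using 1
    ext <;> norm_num
  have h10 : ((1, 0) : ZMod n × ZMod n) ∈ S := by
    convert S.sub_mem S.one_mem h01 using 1
    ext <;> simp
  refine top_unique fun y _ => ?_
  have hy : y = y.1 • (1, 0) + y.2 • (0, 1) := by ext <;> simp
  rw [hy]
  exact S.add_mem (S.zmod_smul_mem _ h10) (S.zmod_smul_mem _ h01)

theorem coverable_zmod_two_prod : Coverable (ZMod 2 × ZMod 2) := by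
  let diagonal : NonUnitalSubring (ZMod 2 × ZMod 2) :=
    (RingHom.eqLocus (RingHom.fst _ _) (RingHom.snd _ _)).toNonUnitalSubring
  have mem_diagonal (x : ZMod 2 × ZMod 2) : x ∈ diagonal ↔ x.1 = x.2 := Iff.rfl
  refine ⟨3, ![diagonal, .prod ⊤ ⊥, .prod ⊥ ⊤], fun i hi => ?_, fun x => ?_⟩
  · fin_cases i
    · simpa [mem_diagonal] using (NonUnitalSubring.eq_top_iff' _).1 hi (0, 1)
    · simpa [NonUnitalSubring.mem_prod, NonUnitalSubring.mem_bot] using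
        (NonUnitalSubring.eq_top_iff' _).1 hi (0, 1)
    · simpa [NonUnitalSubring.mem_prod, NonUnitalSubring.mem_bot] using
        (NonUnitalSubring.eq_top_iff' _).1 hi (1, 0)
  · have : x.1 = x.2 ∨ x.2 = 0 ∨ x.1 = 0 := by revert x; decide
    rcases this with h | h | h
    · exact ⟨0, (mem_diagonal x).2 h⟩
    · exact ⟨1, NonUnitalSubring.mem_prod.2 ⟨trivial, NonUnitalSubring.mem_bot.2 h⟩⟩
    · exact ⟨2, NonUnitalSubring.mem_prod.2 ⟨NonUnitalSubring.mem_bot.2 h, trivial⟩⟩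

/-- Among the unital rings of order `p²`, namely `ℤ/p²`, `F_{p²}`, `F_p[t]/(t²)` and
`F_p × F_p`, the only coverable one is `F₂ × F₂`. -/
theorem coverable_rings_of_order_p_squared (p : ℕ) [Fact p.Prime] :
    ¬ Coverable (ZMod (p ^ 2)) ∧
    ¬ Coverable (GaloisField p 2) ∧
    ¬ Coverable (DualNumber (ZMod p)) ∧
    (Coverable (ZMod p × ZMod p) ↔ p = 2) := by
  refine ⟨not_coverable_of_isUnit_of_subring_closure_eq_top isUnit_one (ZMod.subring_eq_top _),
    ?_, ?_, ⟨fun hcover => ?_, fun hp => hp ▸ coverable_zmod_two_prod⟩⟩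
  · obtain ⟨g, hg⟩ := IsCyclic.exists_generator (α := (GaloisField p 2)ˣ)
    exact not_coverable_of_isUnit_of_subring_closure_eq_top g.isUnit
      (Subring.closure_singleton_eq_top_of_forall_mem_zpowers hg)
  · have : Finite (DualNumber (ZMod p)) := inferInstanceAs (Finite (ZMod p × ZMod p))
    exact not_coverable_of_isUnit_of_subring_closure_eq_top
      (TrivSqZeroExt.isUnit_iff_isUnit_fst.2 (by simp))
      (DualNumber.subring_closure_one_add_eps_eq_top p)
  · by_contra hp
    have htwo : (2 : ZMod p) ≠ 0 := Ring.two_ne_zero (by rwa [ZMod.ringChar_zmod_n])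
    exact not_coverable_of_isUnit_of_subring_closure_eq_top
      (Prod.isUnit_iff.2 ⟨isUnit_one, htwo.isUnit⟩) (ZMod.prod_subring_closure_one_two_eq_top p)
      hcover
end

section
/- For every prime p, the ring F_p[t]/(t²) is generated as a ring (without 1) by the single element 1 + t; in particular it is not coverable by proper subrings. -/
/-!
If `ε² = 0` then `1 = 2(1 + ε) - (1 + ε)²`, so the non-unital subring generated by `1 + ε`
contains `1`, hence `ε`. Over a ring additively generated by `1`, such as `ZMod n`, every dual
number is an integer combination of `1` and `ε`. A ring generated by a single element `a` is
not a union of proper subrings, since the subring containing `a` contains everything.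
-/

theorem Coverable.closure_singleton_ne_top {R : Type*} [NonUnitalRing R] (h : Coverable R)
    (a : R) : NonUnitalSubring.closure {a} ≠ ⊤ := by
  obtain ⟨n, c, hproper, hcover⟩ := h
  obtain ⟨i, hai⟩ := hcover a
  intro htop
  apply hproper i
  rw [eq_top_iff, ← htop, NonUnitalSubring.closure_le, Set.singleton_subset_iff]
  exact hai

theorem one_mem_closure_one_add {A : Type*} [Ring A] {e : A} (he : e * e = 0) :
    (1 : A) ∈ NonUnitalSubring.closure {1 + e} := by
  set S := NonUnitalSubring.closure {1 + e}
  have ha : 1 + e ∈ S := NonUnitalSubring.subset_closure rfl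
  have h_one : (1 : A) = (1 + e) + (1 + e) - (1 + e) * (1 + e) := by
    simp only [add_mul, mul_add, he, one_mul, mul_one]
    abel
  rw [h_one]
  exact S.sub_mem (S.add_mem ha ha) (S.mul_mem ha ha)

theorem DualNumber.closure_one_add_eps_eq_top {R : Type*} [CommRing R]
    (hR : Function.Surjective (Int.cast : ℤ → R)) :
    NonUnitalSubring.closure {(1 + DualNumber.eps : DualNumber R)} = ⊤ := by
  set S := NonUnitalSubring.closure {(1 + DualNumber.eps : DualNumber R)}
  have h_one : (1 : DualNumber R) ∈ S := one_mem_closure_one_add DualNumber.eps_mul_eps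
  have h_eps : (DualNumber.eps : DualNumber R) ∈ S := by
    simpa using S.sub_mem (NonUnitalSubring.subset_closure rfl) h_one
  refine eq_top_iff.2 fun x _ => ?_
  obtain ⟨k, hk⟩ := hR x.fst
  obtain ⟨m, hm⟩ := hR x.snd
  have hx : x = k • (1 : DualNumber R) + m • DualNumber.eps := by
    ext <;> simp [hk, hm]
  rw [hx]
  exact S.add_mem (zsmul_mem h_one k) (zsmul_mem h_eps m)

theorem dual_numbers_generated_by_one_add_eps_general (p : ℕ) :
    NonUnitalSubring.closure {(1 + DualNumber.eps : DualNumber (ZMod p))} = ⊤ ∧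
    ¬ Coverable (DualNumber (ZMod p)) := by
  have htop := DualNumber.closure_one_add_eps_eq_top (ZMod.intCast_surjective (n := p))
  exact ⟨htop, fun hcov => hcov.closure_singleton_ne_top _ htop⟩

/-- For every prime `p`, the dual numbers `F_p[t]/(t²)` are generated as a (non-unital)
ring by the single element `1 + t`; in particular the ring is not coverable. -/
theorem dual_numbers_generated_by_one_add_eps (p : ℕ) (hp : p.Prime) :
    NonUnitalSubring.closure {(1 + DualNumber.eps : DualNumber (ZMod p))} = ⊤ ∧
    ¬ Coverable (DualNumber (ZMod p)) :=
  dual_numbers_generated_by_one_add_eps_general p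
end
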